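/- For every integer r ≥ 1, the number of functions f from {1,…,r} to {1,…,r} such that for every k ∈ {1,…,r} one has #{ j : f(j) ≤ k } ≥ k, equals (r+1)^{r−1}. -/

import Mathlib

/-!
Pollak's circular argument. Let the `r` cars choose among `r + 1` spots on a circle; adding a
constant to all preferences is a free action of `ZMod (r + 1)`. Exactly one shift in each orbit
leaves the extra spot empty, i.e. is a parking function, so `(r + 1) * #PF = (r + 1) ^ r`. The
good shift is found by the cycle lemma applied to the excess
`D t = #{cars preferring one of the spots 0, …, t - 1 (mod r + 1)} - t`, which drops by one over
each period.
-/

open Finset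

theorem cycle_lemma {n : ℕ} (hn : 0 < n) {D : ℕ → ℤ} (hD : ∀ t, D (t + n) = D t - 1) :
    ∃! c, c < n ∧ ∀ k < n, D c ≤ D (c + k) := by
  have hmin : ∃ c, c < n ∧ ∀ m < n, D c ≤ D m := by
    obtain ⟨c, hc, hcmin⟩ := (range n).exists_min_image D ⟨0, mem_range.2 hn⟩
    exact ⟨c, mem_range.1 hc, fun m hm => hcmin m (mem_range.2 hm)⟩
  obtain ⟨hc, hcmin⟩ := Nat.find_spec hmin
  set c := Nat.find hmin
  -- `c` is the first minimiser of `D` on a period, so all earlier values are strictly larger.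
  have hfirst : ∀ m < c, D c < D m := fun m hm => by
    by_contra! h
    exact Nat.find_min hmin hm ⟨hm.trans hc, fun m' hm' => h.trans (hcmin m' hm')⟩
  refine ⟨c, ⟨hc, fun k hk => ?_⟩, ?_⟩
  · rcases lt_or_ge (c + k) n with h | h
    · exact hcmin _ h
    · have hwrap := hD (c + k - n)
      rw [Nat.sub_add_cancel h] at hwrap
      have := hfirst (c + k - n) (by omega)
      omega
  · rintro c' ⟨hc', hc'min⟩
    by_contra hne
    rcases Nat.lt_or_gt_of_ne hne with h | h
    · have := hc'min (c - c') (by omega)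
      rw [Nat.add_sub_cancel' h.le] at this
      have := hfirst c' h
      omega
    · have h₁ := hcmin c' hc'
      have h₂ := hc'min (c + n - c') (by omega)
      rw [Nat.add_sub_cancel' (by omega), hD] at h₂
      omega

section Parking

variable {ι : Type*} [Fintype ι] {n : ℕ}

def excess (g : ι → ZMod n) (t : ℕ) : ℤ :=
  ∑ u ∈ range t, (#{j | g j = u} : ℤ) - t

/-- Spots are `0, …, n - 1`; for `n = card ι + 1` this says that the cars park on a line and
leave the last spot empty. -/
def IsParking (h : ι → ZMod n) : Prop :=
  ∀ k < n, k ≤ #{j | (h j).val < k}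

theorem card_filter_val_sub_lt [NeZero n] (g : ι → ZMod n) (c : ZMod n) {k : ℕ} (hk : k ≤ n) :
    #{j | (g j - c).val < k} = ∑ u ∈ range k, #{j | g j = c + u} := by
  rw [card_eq_sum_card_fiberwise (f := fun j => (g j - c).val) (t := range k)
    (fun j hj => by simpa using hj)]
  refine sum_congr rfl fun u huk => congrArg card ?_
  have hun : u < n := (mem_range.1 huk).trans_le hk
  ext j
  simp only [mem_filter, mem_univ, true_and]
  rw [← sub_eq_iff_eq_add', ← (ZMod.val_injective n).eq_iff, ZMod.val_cast_of_lt hun]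
  exact and_iff_right_of_imp fun h => h ▸ mem_range.1 huk

theorem excess_add (g : ι → ZMod n) (t k : ℕ) :
    excess g (t + k) = excess g t + ∑ u ∈ range k, (#{j | g j = t + u} : ℤ) - k := by
  simp only [excess, sum_range_add, Nat.cast_add]
  ring

theorem excess_add_of_le [NeZero n] (g : ι → ZMod n) (t : ℕ) {k : ℕ} (hk : k ≤ n) :
    excess g (t + k) = excess g t + #{j | (g j - t).val < k} - k := by
  rw [excess_add, card_filter_val_sub_lt g _ hk]
  push_cast
  ring

theorem excess_add_period [NeZero n] (g : ι → ZMod n) (t : ℕ) :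
    excess g (t + n) = excess g t + Fintype.card ι - n := by
  simp [excess_add_of_le g t le_rfl, ZMod.val_lt]

theorem isParking_sub_iff [NeZero n] (g : ι → ZMod n) (c : ZMod n) :
    IsParking (fun j => g j - c) ↔ ∀ k < n, excess g c.val ≤ excess g (c.val + k) := by
  simp only [IsParking]
  refine forall₂_congr fun k hk => ?_
  rw [excess_add_of_le g c.val hk.le, ZMod.natCast_zmod_val]
  omega

theorem existsUnique_isParking_sub (hn : Fintype.card ι + 1 = n) (g : ι → ZMod n) :
    ∃! c : ZMod n, IsParking (fun j => g j - c) := by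
  have : NeZero n := ⟨by omega⟩
  obtain ⟨c, ⟨hc, hmin⟩, huniq⟩ :=
    cycle_lemma (NeZero.pos n) (D := excess g) fun t => by rw [excess_add_period]; omega
  refine ⟨c, ?_, fun z hz => ?_⟩
  · beta_reduce
    rw [isParking_sub_iff, ZMod.val_cast_of_lt hc]
    exact hmin
  · rw [← ZMod.natCast_zmod_val z, huniq z.val ⟨z.val_lt, (isParking_sub_iff g z).1 hz⟩]

theorem card_isParking_mul (hn : Fintype.card ι + 1 = n) :
    Nat.card {h : ι → ZMod n // IsParking h} * n = n ^ Fintype.card ι := by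
  have hbij : Function.Bijective
      fun p : {h : ι → ZMod n // IsParking h} × ZMod n => fun j => p.1.1 j + p.2 := by
    constructor
    · rintro ⟨⟨h, hh⟩, c⟩ ⟨⟨h', hh'⟩, c'⟩ heq
      have hg : ∀ j, h j + c = h' j + c' := congrFun heq
      obtain rfl : c = c' := (existsUnique_isParking_sub hn fun j => h j + c).unique
        (by simpa using hh) (by simpa [hg] using hh')
      obtain rfl : h = h' := funext fun j => add_right_cancel (hg j)
      rfl
    · intro g
      obtain ⟨c, hc, -⟩ := existsUnique_isParking_sub hn g
      exact ⟨(⟨_, hc⟩, c), by simp⟩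
  calc Nat.card {h : ι → ZMod n // IsParking h} * n
      = Nat.card ({h : ι → ZMod n // IsParking h} × ZMod n) := by
        rw [Nat.card_prod, Nat.card_zmod]
    _ = Nat.card (ι → ZMod n) := Nat.card_eq_of_bijective _ hbij
    _ = n ^ Fintype.card ι := by rw [Nat.card_fun, Nat.card_zmod, Nat.card_eq_fintype_card]

theorem card_isParking (hn : Fintype.card ι + 1 = n) :
    Nat.card {h : ι → ZMod n // IsParking h} = n ^ (Fintype.card ι - 1) := by
  have hpow : n ^ Fintype.card ι = n ^ (Fintype.card ι - 1) * n := by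
    rcases Nat.eq_zero_or_pos (Fintype.card ι) with h | h
    · simp [h, ← hn]
    · rw [← pow_succ, Nat.sub_add_cancel h]
  exact Nat.eq_of_mul_eq_mul_right (by omega) ((card_isParking_mul hn).trans hpow)

theorem IsParking.val_lt (hn : Fintype.card ι + 1 = n) {h : ι → ZMod n} (hh : IsParking h)
    (j : ι) : (h j).val < Fintype.card ι := by
  have hall := card_filter_eq_iff.1 <|
    (card_filter_le _ _).antisymm (hh (Fintype.card ι) (by omega))
  simpa using hall j (mem_univ j)

end Parking

def parkingFunctionEquiv (r : ℕ) :
    {f : Fin r → ℕ // (∀ j, 1 ≤ f j ∧ f j ≤ r) ∧ ∀ k, 1 ≤ k → k ≤ r → k ≤ #{j | f j ≤ k}} ≃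
      {h : Fin r → ZMod (r + 1) // IsParking h} where
  toFun f := ⟨fun j => (f.1 j - 1 : ℕ), fun k hk => by
    rcases k.eq_zero_or_pos with rfl | hk₀
    · exact Nat.zero_le _
    convert f.2.2 k hk₀ (by omega) using 2
    ext j
    have := f.2.1 j
    simp only [mem_filter, mem_univ, true_and, ZMod.val_cast_of_lt (by omega : f.1 j - 1 < r + 1)]
    omega⟩
  invFun h := ⟨fun j => (h.1 j).val + 1,
    fun j => ⟨Nat.le_add_left 1 _, by simpa using h.2.val_lt (by simp) j⟩,
    fun k _ hk => h.2 k (by omega)⟩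
  left_inv f := Subtype.ext <| funext fun j => by
    have := f.2.1 j
    simp only [ZMod.val_cast_of_lt (by omega : f.1 j - 1 < r + 1)]
    omega
  right_inv h := Subtype.ext <| funext fun j => by simp

theorem stmt6 (r : ℕ) :
    Nat.card {f : Fin r → ℕ //
      (∀ j, 1 ≤ f j ∧ f j ≤ r) ∧
      (∀ k : ℕ, 1 ≤ k → k ≤ r →
        k ≤ (Finset.univ.filter (fun j => f j ≤ k)).card)} = (r + 1) ^ (r - 1) := by
  rw [Nat.card_congr (parkingFunctionEquiv r), card_isParking (by simp), Fintype.card_fin]
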